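/- arXiv:1612.01203 — 2 statements merged into one kernel-verified Lean document; each statement's English description precedes it below -/
import Mathlib

section
/- Let A ≥ m² > 0 be self-adjoint on a Hilbert space K, and for compactly supported f ∈ L¹(ℝ; K) define (Λ̃^± f)(t) = ∫ A^{-1/2} e^{±i(t-s)A^{1/2}} f(s) ds. Then Λ̃± are positive in the sense that ∫∫ ⟨f(t), A^{-1/2} e^{±i(t-s)A^{1/2}} f(s)⟩ dt ds ≥ 0 for all such f. -/
/-!
Writing `U t = e^{itB}`, the group law and unitarity `(U t)* = U (-t)` factor the kernel as
`U (t - s) = U(-t)* U(-s)`. Since `B⁻¹` commutes with `U`, the smeared pairing collapses to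
`⟪g, B⁻¹ g⟫` with `g = ∫ U(-s) f(s) ds`, and `B⁻¹` is a positive operator because `B` is.
The other sign is the same computation for `-B`.
-/

open scoped InnerProductSpace
open MeasureTheory

/-- `e^{itB}` for a bounded operator `B`, via the exponential series. -/
noncomputable def expOp {H : Type*} [NormedAddCommGroup H] [InnerProductSpace ℂ H]
    [CompleteSpace H] (B : H →L[ℂ] H) (t : ℝ) : H →L[ℂ] H :=
  NormedSpace.exp ((t : ℂ) • (Complex.I • B))

theorem integral_inner_left {α 𝕜 E : Type*} [MeasurableSpace α] {μ : Measure α} [RCLike 𝕜]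
    [NormedAddCommGroup E] [InnerProductSpace 𝕜 E] [CompleteSpace E] [NormedSpace ℝ E]
    {f : α → E} (hf : Integrable f μ) (c : E) :
    ∫ x, ⟪f x, c⟫_𝕜 ∂μ = ⟪∫ x, f x ∂μ, c⟫_𝕜 := by
  calc ∫ x, ⟪f x, c⟫_𝕜 ∂μ = ∫ x, starRingEnd 𝕜 ⟪c, f x⟫_𝕜 ∂μ := by simp only [inner_conj_symm]
    _ = starRingEnd 𝕜 (∫ x, ⟪c, f x⟫_𝕜 ∂μ) := integral_conj
    _ = ⟪∫ x, f x ∂μ, c⟫_𝕜 := by rw [integral_inner hf, inner_conj_symm]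

namespace ContinuousLinearMap

variable {𝕜 E : Type*} [RCLike 𝕜] [NormedAddCommGroup E] [InnerProductSpace 𝕜 E]

theorem IsPositive.of_comp_eq_one {B Binv : E →L[𝕜] E} (hB : B.IsPositive)
    (hinv : B ∘L Binv = 1) : Binv.IsPositive := by
  have hBBinv (x : E) : B (Binv x) = x := by
    rw [← comp_apply, hinv]
    rfl
  refine ⟨fun x y => ?_, fun x => ?_⟩
  · calc ⟪Binv x, y⟫_𝕜 = ⟪Binv x, B (Binv y)⟫_𝕜 := by rw [hBBinv]
      _ = ⟪B (Binv x), Binv y⟫_𝕜 := (hB.inner_left_eq_inner_right _ _).symm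
      _ = ⟪x, Binv y⟫_𝕜 := by rw [hBBinv]
  · simpa only [reApplyInnerSelf_apply, hBBinv] using hB.re_inner_nonneg_right (Binv x)

end ContinuousLinearMap

section expOp

variable {H : Type*} [NormedAddCommGroup H] [InnerProductSpace ℂ H] [CompleteSpace H]

-- The exponential series API is stated for normed `ℚ`-algebras.
noncomputable instance : NormedAlgebra ℚ (H →L[ℂ] H) :=
  NormedAlgebra.restrictScalars ℚ ℂ (H →L[ℂ] H)

theorem expOp_add (B : H →L[ℂ] H) (t s : ℝ) : expOp B (t + s) = expOp B t * expOp B s := by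
  rw [expOp, expOp, expOp, Complex.ofReal_add, add_smul]
  exact NormedSpace.exp_add_of_commute (((Commute.refl _).smul_left _).smul_right _)

theorem expOp_neg (B : H →L[ℂ] H) (t : ℝ) : expOp B (-t) = expOp (-B) t := by
  rw [expOp, expOp, Complex.ofReal_neg, neg_smul, smul_neg, smul_neg]

theorem star_expOp {B : H →L[ℂ] H} (hB : IsSelfAdjoint B) (t : ℝ) :
    star (expOp B t) = expOp B (-t) := by
  rw [expOp, expOp, NormedSpace.star_exp, star_smul, star_smul, hB.star_eq]
  simp only [RCLike.star_def, Complex.conj_ofReal, Complex.conj_I, neg_smul, smul_neg, smul_smul,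
    Complex.ofReal_neg, neg_mul]

theorem continuous_expOp (B : H →L[ℂ] H) : Continuous (expOp B) :=
  NormedSpace.exp_continuous.comp (by fun_prop)

theorem Commute.expOp_right {B C : H →L[ℂ] H} (h : Commute C B) (t : ℝ) :
    Commute C (expOp B t) :=
  ((h.smul_right _).smul_right _).exp_right

theorem integral_integral_inner_expOp_sub {B C : H →L[ℂ] H} (hB : IsSelfAdjoint B)
    (hC : Commute C B) {f : ℝ → H} (hf : Continuous f) (hsupp : HasCompactSupport f) :
    ∫ t, ∫ s, ⟪f t, C (expOp B (t - s) (f s))⟫_ℂ =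
      ⟪∫ s, expOp B (-s) (f s), C (∫ s, expOp B (-s) (f s))⟫_ℂ := by
  set w : ℝ → H := fun s => expOp B (-s) (f s)
  have hw : Integrable w :=
    (((continuous_expOp B).comp continuous_neg).clm_apply hf).integrable_of_hasCompactSupport
      (hsupp.mono fun s hs h0 => hs (by simp [h0]))
  set g := ∫ s, w s
  have inner_eq (t : ℝ) : ∫ s, ⟪f t, C (expOp B (t - s) (f s))⟫_ℂ = ⟪w t, C g⟫_ℂ := by
    have hsplit (s : ℝ) : C (expOp B (t - s) (f s)) = (C * expOp B t) (w s) := by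
      rw [sub_eq_add_neg, expOp_add]
      rfl
    calc ∫ s, ⟪f t, C (expOp B (t - s) (f s))⟫_ℂ = ∫ s, ⟪f t, (C * expOp B t) (w s)⟫_ℂ := by
          simp_rw [hsplit]
      _ = ⟪f t, (C * expOp B t) g⟫_ℂ := by
          rw [integral_inner ((C * expOp B t).integrable_comp hw),
            ContinuousLinearMap.integral_comp_comm _ hw]
      _ = ⟪f t, expOp B t (C g)⟫_ℂ := by rw [(hC.expOp_right t).eq]; rfl
      _ = ⟪w t, C g⟫_ℂ := by
          rw [← ContinuousLinearMap.adjoint_inner_left, ← ContinuousLinearMap.star_eq_adjoint,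
            star_expOp hB]
  simp_rw [inner_eq]
  exact integral_inner_left hw _

end expOp

theorem twopoint_positive_general {H : Type*} [NormedAddCommGroup H]
    [InnerProductSpace ℂ H] [CompleteSpace H]
    (B Binv : H →L[ℂ] H) (hB : IsSelfAdjoint B)
    (m : ℝ) (hm : 0 < m) (hBm : ∀ v : H, m * ‖v‖ ^ 2 ≤ (⟪v, B v⟫_ℂ).re)
    (hinv₁ : Binv ∘L B = 1) (hinv₂ : B ∘L Binv = 1)
    (f : ℝ → H) (hf : Continuous f) (hsupp : HasCompactSupport f) :
    (0 ≤ (∫ t : ℝ, ∫ s : ℝ, ⟪f t, Binv (expOp B (t - s) (f s))⟫_ℂ).re ∧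
        (∫ t : ℝ, ∫ s : ℝ, ⟪f t, Binv (expOp B (t - s) (f s))⟫_ℂ).im = 0) ∧
    (0 ≤ (∫ t : ℝ, ∫ s : ℝ, ⟪f t, Binv (expOp B (-(t - s)) (f s))⟫_ℂ).re ∧
        (∫ t : ℝ, ∫ s : ℝ, ⟪f t, Binv (expOp B (-(t - s)) (f s))⟫_ℂ).im = 0) := by
  have hBpos : B.IsPositive := ⟨hB.isSymmetric, fun v => by
    rw [ContinuousLinearMap.reApplyInnerSelf_apply, show ⟪B v, v⟫_ℂ = ⟪v, B v⟫_ℂ from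
      hB.isSymmetric v v]
    exact (hBm v).trans' (by positivity)⟩
  have hBinv : Binv.IsPositive := hBpos.of_comp_eq_one hinv₂
  have hcomm : Commute Binv B := hinv₁.trans hinv₂.symm
  have real_nonneg (g : H) : 0 ≤ (⟪g, Binv g⟫_ℂ).re ∧ (⟪g, Binv g⟫_ℂ).im = 0 :=
    (Complex.nonneg_iff.mp (hBinv.inner_nonneg_right g)).imp_right Eq.symm
  simp only [expOp_neg]
  rw [integral_integral_inner_expOp_sub hB hcomm hf hsupp,
    integral_integral_inner_expOp_sub hB.neg hcomm.neg_right hf hsupp]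
  exact ⟨real_nonneg _, real_nonneg _⟩

/-- Positivity of the vacuum two-point functions
`Λ̃^± f(t) = ∫ A^{-1/2} e^{±i(t-s)A^{1/2}} f(s) ds` for the abstract Klein–Gordon equation
with `A = B² ≥ m² > 0`: the smeared pairing
`∫∫ ⟨f(t), A^{-1/2} e^{±i(t-s)A^{1/2}} f(s)⟩ dt ds` is real and nonnegative. -/
theorem twopoint_positive {H : Type*} [NormedAddCommGroup H]
    [InnerProductSpace ℂ H] [CompleteSpace H]
    (A B Binv : H →L[ℂ] H) (hB : IsSelfAdjoint B) (hAB : A = B ∘L B)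
    (m : ℝ) (hm : 0 < m) (hBm : ∀ v : H, m * ‖v‖ ^ 2 ≤ (⟪v, B v⟫_ℂ).re)
    (hinv₁ : Binv ∘L B = 1) (hinv₂ : B ∘L Binv = 1)
    (f : ℝ → H) (hf : Continuous f) (hsupp : HasCompactSupport f) :
    (0 ≤ (∫ t : ℝ, ∫ s : ℝ, ⟪f t, Binv (expOp B (t - s) (f s))⟫_ℂ).re ∧
        (∫ t : ℝ, ∫ s : ℝ, ⟪f t, Binv (expOp B (t - s) (f s))⟫_ℂ).im = 0) ∧
    (0 ≤ (∫ t : ℝ, ∫ s : ℝ, ⟪f t, Binv (expOp B (-(t - s)) (f s))⟫_ℂ).re ∧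
        (∫ t : ℝ, ∫ s : ℝ, ⟪f t, Binv (expOp B (-(t - s)) (f s))⟫_ℂ).im = 0) :=
  twopoint_positive_general B Binv hB m hm hBm hinv₁ hinv₂ f hf hsupp
end

section
/- Let A ≥ m² > 0 be self-adjoint on a Hilbert space K. For compactly supported continuous f : ℝ → K, define u(t) = (P̃₊^{-1} f)(t) = ∫_{-∞}^{t} A^{-1/2} sin((t-s)A^{1/2}) f(s) ds. Then for f with values in Dom(A^{1/2}): (1) u(t) = 0 for t below the support of f; (2) u is C¹ with u'(t) = ∫_{-∞}^t cos((t-s)A^{1/2}) f(s) ds; (3) if moreover f takes values in Dom(A), then u is C² and u''(t) + A u(t) = f(t) for all t. -/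
/-!
Write `sin(τB) = (e^{τ(iB)} - e^{-τ(iB)}) / 2i` and `cos(τB) = (e^{τ(iB)} + e^{-τ(iB)}) / 2`.
Both integrals then become combinations of the Duhamel integrals
`D_C(t) = ∫_{-∞}^t e^{(t-s)C} f(s) ds` for `C = ± iB`. Factoring `e^{(t-s)C} = e^{tC} e^{-sC}`
and applying the fundamental theorem of calculus gives `D_C' = C D_C + f`. From this,
`u' = ∫_{-∞}^t cos((t-s)B) f(s) ds` and `(u')' = f - B² u` follow by linear algebra, using
`B⁻¹B = BB⁻¹ = 1`.
-/

open scoped InnerProductSpace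
open MeasureTheory

/-- `sin(tB)` via `sin(tB) = (e^{itB} - e^{-itB})/(2i)`. -/
noncomputable def sinOp {H : Type*} [NormedAddCommGroup H] [InnerProductSpace ℂ H]
    [CompleteSpace H] (B : H →L[ℂ] H) (t : ℝ) : H →L[ℂ] H :=
  (2 * Complex.I)⁻¹ • (expOp B t - expOp B (-t))

/-- `cos(tB)` via `cos(tB) = (e^{itB} + e^{-itB})/2`. -/
noncomputable def cosOp {H : Type*} [NormedAddCommGroup H] [InnerProductSpace ℂ H]
    [CompleteSpace H] (B : H →L[ℂ] H) (t : ℝ) : H →L[ℂ] H :=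
  (2 : ℂ)⁻¹ • (expOp B t + expOp B (-t))

open NormedSpace Set

theorem exp_add_smul {𝔸 : Type*} [NormedRing 𝔸] [NormedAlgebra ℝ 𝔸] [CompleteSpace 𝔸]
    (x : 𝔸) (a b : ℝ) : exp ((a + b) • x) = exp (a • x) * exp (b • x) := by
  rw [add_smul]
  exact exp_add_of_commute_of_mem_ball (𝕂 := ℝ) (((Commute.refl x).smul_left a).smul_right b)
    (by simp [expSeries_radius_eq_top]) (by simp [expSeries_radius_eq_top])

theorem HasCompactSupport.integrable_clm_apply {𝕜 E F : Type*} [NontriviallyNormedField 𝕜]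
    [NormedAddCommGroup E] [NormedSpace 𝕜 E] [NormedAddCommGroup F] [NormedSpace 𝕜 F]
    {L : ℝ → E →L[𝕜] F} {f : ℝ → E} (hsupp : HasCompactSupport f) (hL : Continuous L)
    (hf : Continuous f) : Integrable fun s => L s (f s) :=
  (hL.clm_apply hf).integrable_of_hasCompactSupport <| hsupp.mono fun s hs h => hs (by simp [h])

theorem hasDerivAt_integral_Iic {E : Type*} [NormedAddCommGroup E] [NormedSpace ℝ E]
    [CompleteSpace E] {g : ℝ → E} (hg : Continuous g) (hint : Integrable g) (t : ℝ) :
    HasDerivAt (fun τ => ∫ s in Iic τ, g s) (g t) t := by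
  have hsplit : (fun τ => ∫ s in Iic τ, g s) = fun τ => (∫ s in Iic 0, g s) + ∫ s in 0..τ, g s :=
    funext fun τ => by
      rw [← intervalIntegral.integral_Iic_sub_Iic hint.integrableOn hint.integrableOn,
        add_sub_cancel]
  rw [hsplit]
  exact (intervalIntegral.integral_hasDerivAt_right (hg.intervalIntegrable 0 t)
    (hg.stronglyMeasurableAtFilter _ _) hg.continuousAt).const_add _

section ComplexLinear

variable {E F : Type*} [NormedAddCommGroup E] [NormedSpace ℂ E] [NormedAddCommGroup F]
  [NormedSpace ℂ F] {t : ℝ} {w : ℝ → E} {w' : E}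

theorem HasDerivAt.complex_clm_apply {c : ℝ → E →L[ℂ] F} {c' : E →L[ℂ] F}
    (hc : HasDerivAt c c' t) (hw : HasDerivAt w w' t) :
    HasDerivAt (fun τ => c τ (w τ)) (c' (w t) + c t w') t :=
  HasDerivAt.clm_apply (c := fun τ => (c τ).restrictScalars ℝ)
    ((ContinuousLinearMap.restrictScalarsL ℂ E F ℝ ℝ).hasFDerivAt.comp_hasDerivAt t hc) hw

theorem ContinuousLinearMap.hasDerivAt_complex_comp (L : E →L[ℂ] F) (hw : HasDerivAt w w' t) :
    HasDerivAt (fun τ => L (w τ)) (L w') t :=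
  (L.restrictScalars ℝ).hasFDerivAt.comp_hasDerivAt t hw

end ComplexLinear

section Duhamel

variable {E : Type*} [NormedAddCommGroup E] [NormedSpace ℂ E] [CompleteSpace E]

noncomputable def duhamel (C : E →L[ℂ] E) (f : ℝ → E) (t : ℝ) : E :=
  ∫ s in Iic t, exp ((t - s) • C) (f s)

theorem continuous_exp_smul (C : E →L[ℂ] E) : Continuous fun τ : ℝ => exp (τ • C) :=
  (differentiable_exp_smul_const (𝕂 := ℝ) C).continuous

theorem integrable_exp_sub_smul_apply (C : E →L[ℂ] E) {f : ℝ → E} (hf : Continuous f)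
    (hsupp : HasCompactSupport f) (t : ℝ) : Integrable fun s => exp ((t - s) • C) (f s) :=
  hsupp.integrable_clm_apply ((continuous_exp_smul C).comp (continuous_const.sub continuous_id)) hf

theorem hasDerivAt_duhamel (C : E →L[ℂ] E) {f : ℝ → E} (hf : Continuous f)
    (hsupp : HasCompactSupport f) (t : ℝ) :
    HasDerivAt (duhamel C f) (C (duhamel C f t) + f t) t := by
  have hexp_neg : Continuous fun s : ℝ => exp ((-s) • C) :=
    (continuous_exp_smul C).comp continuous_neg
  have hint : Integrable fun s => exp ((-s) • C) (f s) := hsupp.integrable_clm_apply hexp_neg hf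
  have hfactor : duhamel C f = fun τ => exp (τ • C) (∫ s in Iic τ, exp ((-s) • C) (f s)) :=
    funext fun τ => by
      rw [duhamel, ← ContinuousLinearMap.integral_comp_comm _ hint.integrableOn]
      congr 1 with s
      rw [sub_eq_add_neg]
      exact DFunLike.congr_fun (exp_add_smul C τ (-s)) (f s)
  have hinner := hasDerivAt_integral_Iic (hexp_neg.clm_apply hf) hint t
  rw [hfactor]
  convert (hasDerivAt_exp_smul_const' (𝕂 := ℝ) C t).complex_clm_apply hinner using 1
  have hcancel : exp (t • C) * exp ((-t) • C) = 1 :=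
    calc exp (t • C) * exp ((-t) • C) = exp ((t + -t) • C) := (exp_add_smul C t (-t)).symm
      _ = 1 := by simp
  show _ = _ + (exp (t • C) * exp ((-t) • C)) (f t)
  rw [hcancel]
  rfl

end Duhamel

section Propagator

open Complex

variable {H : Type*} [NormedAddCommGroup H] [InnerProductSpace ℂ H] [CompleteSpace H]
  {f : ℝ → H}

theorem expOp_eq_exp_smul (B : H →L[ℂ] H) (τ : ℝ) : expOp B τ = exp (τ • (I • B)) := by
  rw [expOp, Complex.coe_smul]

theorem expOp_neg_eq_exp_smul (B : H →L[ℂ] H) (τ : ℝ) : expOp B (-τ) = exp (τ • -(I • B)) := by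
  rw [expOp_eq_exp_smul, smul_neg, neg_smul]

theorem sinOp_eq (B : H →L[ℂ] H) (τ : ℝ) :
    sinOp B τ = (2 * I)⁻¹ • (exp (τ • (I • B)) - exp (τ • -(I • B))) := by
  rw [sinOp, expOp_neg_eq_exp_smul, expOp_eq_exp_smul]

theorem cosOp_eq (B : H →L[ℂ] H) (τ : ℝ) :
    cosOp B τ = (2 : ℂ)⁻¹ • (exp (τ • (I • B)) + exp (τ • -(I • B))) := by
  rw [cosOp, expOp_neg_eq_exp_smul, expOp_eq_exp_smul]

theorem integral_Iic_clm_sinOp_apply (L : H →L[ℂ] H) (B : H →L[ℂ] H) (hf : Continuous f)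
    (hsupp : HasCompactSupport f) (t : ℝ) :
    ∫ s in Iic t, L (sinOp B (t - s) (f s)) =
      (2 * I)⁻¹ • L (duhamel (I • B) f t - duhamel (-(I • B)) f t) := by
  have hint := fun C : H →L[ℂ] H => L.integrable_comp (integrable_exp_sub_smul_apply C hf hsupp t)
  simp only [sinOp_eq, smul_apply, sub_apply, map_smul, map_sub]
  rw [integral_smul, integral_sub (hint _).integrableOn (hint _).integrableOn,
    L.integral_comp_comm (integrable_exp_sub_smul_apply _ hf hsupp t).integrableOn,
    L.integral_comp_comm (integrable_exp_sub_smul_apply _ hf hsupp t).integrableOn]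
  rfl

theorem integral_Iic_cosOp_apply (B : H →L[ℂ] H) (hf : Continuous f)
    (hsupp : HasCompactSupport f) (t : ℝ) :
    ∫ s in Iic t, cosOp B (t - s) (f s) =
      (2 : ℂ)⁻¹ • (duhamel (I • B) f t + duhamel (-(I • B)) f t) := by
  have hint := fun C : H →L[ℂ] H => integrable_exp_sub_smul_apply C hf hsupp t
  simp only [cosOp_eq, smul_apply, add_apply]
  rw [integral_smul, integral_add (hint _).integrableOn (hint _).integrableOn]
  rfl

theorem hasDerivAt_integral_Iic_sinOp (B Binv : H →L[ℂ] H) (hinv : Binv ∘L B = 1)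
    (hf : Continuous f) (hsupp : HasCompactSupport f) (t : ℝ) :
    HasDerivAt (fun τ => ∫ s in Iic τ, Binv (sinOp B (τ - s) (f s)))
      (∫ s in Iic t, cosOp B (t - s) (f s)) t := by
  have hD := fun C : H →L[ℂ] H => hasDerivAt_duhamel C hf hsupp t
  have hBinv : ∀ x, Binv (B x) = x := DFunLike.congr_fun hinv
  simp only [integral_Iic_clm_sinOp_apply Binv B hf hsupp, integral_Iic_cosOp_apply B hf hsupp]
  refine ((Binv.hasDerivAt_complex_comp ((hD (I • B)).sub (hD (-(I • B))))).const_smul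
    (2 * I)⁻¹).congr_deriv ?_
  simp only [smul_apply, neg_apply, add_sub_add_right_eq_sub, sub_neg_eq_add]
  rw [← smul_add, ← map_add, map_smul, hBinv, smul_smul, mul_inv, inv_mul_cancel_right₀ I_ne_zero]

theorem hasDerivAt_integral_Iic_cosOp (B Binv : H →L[ℂ] H) (hinv : B ∘L Binv = 1)
    (hf : Continuous f) (hsupp : HasCompactSupport f) (t : ℝ) :
    HasDerivAt (fun τ => ∫ s in Iic τ, cosOp B (τ - s) (f s))
      (f t - B (B (∫ s in Iic t, Binv (sinOp B (t - s) (f s))))) t := by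
  have hD := fun C : H →L[ℂ] H => hasDerivAt_duhamel C hf hsupp t
  have hBBinv : ∀ x, B (Binv x) = x := DFunLike.congr_fun hinv
  simp only [integral_Iic_clm_sinOp_apply Binv B hf hsupp, integral_Iic_cosOp_apply B hf hsupp]
  refine (((hD (I • B)).add (hD (-(I • B)))).const_smul (2 : ℂ)⁻¹).congr_deriv ?_
  simp only [smul_apply, neg_apply, map_smul, map_sub, hBBinv, mul_inv, inv_I]
  module

end Propagator

section SecondDerivative

variable {F : Type*} [NormedAddCommGroup F] [NormedSpace ℝ F] {u v w : ℝ → F}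

theorem contDiff_two_of_hasDerivAt (hu : ∀ t, HasDerivAt u (v t) t)
    (hv : ∀ t, HasDerivAt v (w t) t) (hw : Continuous w) : ContDiff ℝ 2 u := by
  rw [show (2 : WithTop ℕ∞) = 1 + 1 from rfl, contDiff_succ_iff_deriv,
    funext fun t => (hu t).deriv, contDiff_one_iff_deriv, funext fun t => (hv t).deriv]
  exact ⟨fun t => (hu t).differentiableAt, by simp, fun t => (hv t).differentiableAt, hw⟩

theorem iteratedDeriv_two_of_hasDerivAt (hu : ∀ t, HasDerivAt u (v t) t)
    (hv : ∀ t, HasDerivAt v (w t) t) (t : ℝ) : iteratedDeriv 2 u t = w t := by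
  rw [iteratedDeriv_succ, iteratedDeriv_one, funext fun t => (hu t).deriv]
  exact (hv t).deriv

end SecondDerivative

theorem retarded_propagator_formula_general {H : Type*} [NormedAddCommGroup H]
    [InnerProductSpace ℂ H] [CompleteSpace H]
    (A B Binv : H →L[ℂ] H) (hAB : A = B ∘L B)
    (hinv₁ : Binv ∘L B = 1) (hinv₂ : B ∘L Binv = 1)
    (f : ℝ → H) (hf : Continuous f) (hsupp : HasCompactSupport f)
    (u : ℝ → H) (hu : ∀ t : ℝ, u t = ∫ s in Set.Iic t, Binv (sinOp B (t - s) (f s))) :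
    (∀ t : ℝ, (∀ s ∈ Function.support f, t < s) → u t = 0) ∧
    (ContDiff ℝ 1 u ∧ ∀ t : ℝ, deriv u t = ∫ s in Set.Iic t, cosOp B (t - s) (f s)) ∧
    (ContDiff ℝ 2 u ∧ ∀ t : ℝ, iteratedDeriv 2 u t + A (u t) = f t) := by
  have hu' : ∀ t, HasDerivAt u (∫ s in Iic t, cosOp B (t - s) (f s)) t := by
    rw [funext hu]
    exact hasDerivAt_integral_Iic_sinOp B Binv hinv₁ hf hsupp
  have hv' : ∀ t,
      HasDerivAt (fun τ => ∫ s in Iic τ, cosOp B (τ - s) (f s)) (f t - A (u t)) t := by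
    intro t
    rw [hAB, hu t]
    exact hasDerivAt_integral_Iic_cosOp B Binv hinv₂ hf hsupp t
  have hu_cont : Continuous u := continuous_iff_continuousAt.2 fun t => (hu' t).continuousAt
  have hC2 := contDiff_two_of_hasDerivAt hu' hv' (hf.sub (A.continuous.comp hu_cont))
  refine ⟨fun t ht => ?_, ⟨hC2.of_le (by norm_num), fun t => (hu' t).deriv⟩, hC2, fun t => ?_⟩
  · rw [hu t]
    refine setIntegral_eq_zero_of_forall_eq_zero fun s hs => ?_
    rw [Function.notMem_support.1 fun hs' => (ht s hs').not_ge hs, map_zero, map_zero]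
  · rw [iteratedDeriv_two_of_hasDerivAt hu' hv', sub_add_cancel]

/-- The explicit formula `u(t) = ∫_{-∞}^t A^{-1/2} sin((t-s)A^{1/2}) f(s) ds` defines the
retarded propagator for the abstract wave equation `∂ₜ²u + Au = f` with `A = B² ≥ m² > 0`:
(1) `u(t) = 0` for `t` below the support of `f`; (2) `u` is `C¹` with
`u'(t) = ∫_{-∞}^t cos((t-s)A^{1/2}) f(s) ds`; (3) `u` is `C²` and `u'' + Au = f`. -/
theorem retarded_propagator_formula {H : Type*} [NormedAddCommGroup H]
    [InnerProductSpace ℂ H] [CompleteSpace H]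
    (A B Binv : H →L[ℂ] H) (hB : IsSelfAdjoint B) (hAB : A = B ∘L B)
    (m : ℝ) (hm : 0 < m) (hBm : ∀ v : H, m * ‖v‖ ^ 2 ≤ (⟪v, B v⟫_ℂ).re)
    (hinv₁ : Binv ∘L B = 1) (hinv₂ : B ∘L Binv = 1)
    (f : ℝ → H) (hf : Continuous f) (hsupp : HasCompactSupport f)
    (u : ℝ → H) (hu : ∀ t : ℝ, u t = ∫ s in Set.Iic t, Binv (sinOp B (t - s) (f s))) :
    (∀ t : ℝ, (∀ s ∈ Function.support f, t < s) → u t = 0) ∧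
    (ContDiff ℝ 1 u ∧ ∀ t : ℝ, deriv u t = ∫ s in Set.Iic t, cosOp B (t - s) (f s)) ∧
    (ContDiff ℝ 2 u ∧ ∀ t : ℝ, iteratedDeriv 2 u t + A (u t) = f t) :=
  retarded_propagator_formula_general A B Binv hAB hinv₁ hinv₂ f hf hsupp u hu
end
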